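/- arXiv:1811.07883 — 2 statements merged into one kernel-verified Lean document; each statement's English description precedes it below -/
import Mathlib

section
/- For a uniformly random permutation π ∈ S_n and every k ≤ n, the k-profile P_k(π) converges in probability to the constant vector (1/k!,...,1/k!) ∈ ℝ^{k!} as n → ∞. -/
/-!
Write `N_σ(π)` as the number of increasing `k`-tuples `a` at which `π` shows the pattern `σ`.
Right multiplication of `π` by a permutation of the entries of `a` permutes the pattern of `π` at
`a` transitively, so this pattern is uniform on `S_k`; doing this for two tuples with disjoint
ranges at once shows that their patterns are independent. Hence only pairs of tuples sharing an
entry contribute to the variance of `N_σ`, and there are at most `k² C(n,k)² / n` of them. So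
`P_σ` has variance at most `k² / (n k!)`, and Chebyshev's inequality with a union bound over
`σ ∈ S_k` bounds the proportion of permutations whose `k`-profile is `ε`-far from uniform by
`k² / (ε² n)`.
-/

open Finset

/-- Number of occurrences of the pattern `σ ∈ S_k` in the permutation `π ∈ S_n`. -/
def patOcc {n k : ℕ} (π : Equiv.Perm (Fin n)) (σ : Equiv.Perm (Fin k)) : ℕ :=
  (Finset.univ.filter (fun a : Fin k → Fin n =>
    (∀ i j : Fin k, i < j → a i < a j) ∧
    (∀ i j : Fin k, σ i < σ j ↔ π (a i) < π (a j)))).card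

/-- Pattern density `P_σ(π) = N_σ(π) / C(n,k)`. -/
noncomputable def patDens {n k : ℕ} (π : Equiv.Perm (Fin n)) (σ : Equiv.Perm (Fin k)) : ℝ :=
  (patOcc π σ : ℝ) / (n.choose k : ℝ)

open Equiv

namespace Tuple

variable {α : Type*} [LinearOrder α] {k : ℕ} {f : Fin k → α}

theorem sort_eq_iff_strictMono (hf : Function.Injective f) {σ : Perm (Fin k)} :
    sort f = σ ↔ StrictMono (f ∘ σ) := by
  rw [eq_comm, eq_sort_iff]
  exact ⟨fun h => h.1.strictMono_of_injective (hf.comp σ.injective),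
    fun h => ⟨h.monotone, fun i j hij he => absurd he (h hij).ne⟩⟩

theorem sort_eq_inv_iff (hf : Function.Injective f) {σ : Perm (Fin k)} :
    sort f = σ⁻¹ ↔ ∀ i j, σ i < σ j ↔ f i < f j := by
  rw [sort_eq_iff_strictMono hf]
  refine ⟨fun h i j => ?_, fun h i j hij => ?_⟩
  · simpa using (h.lt_iff_lt (a := σ i) (b := σ j)).symm
  · simpa using (h (σ⁻¹ i) (σ⁻¹ j)).1 (by simpa using hij)

theorem sort_comp_perm (hf : Function.Injective f) (ρ : Perm (Fin k)) :
    sort (f ∘ ρ) = ρ⁻¹ * sort f := by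
  rw [sort_eq_iff_strictMono (hf.comp ρ.injective)]
  convert (sort_eq_iff_strictMono hf).1 rfl using 1
  ext i
  simp

theorem sort_mul_comp {a : Fin k → α} (ha : Function.Injective a) {ρ : Perm (Fin k)}
    {c : Perm α} (hc : ∀ i, c (a i) = a (ρ i)) (π : Perm α) :
    sort (⇑(π * c) ∘ a) = ρ⁻¹ * sort (π ∘ a) := by
  rw [← sort_comp_perm (π.injective.comp ha)]
  congr 1
  ext i
  simp [hc]

end Tuple

namespace Finset

theorem card_filter_eq_mul_card_eq_card {G H : Type*} [Fintype G] [Fintype H] [DecidableEq H]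
    (f : G → H) (htrans : ∀ x y, ∃ e : G ≃ G, ∀ g, f (e g) = y ↔ f g = x) (x : H) :
    #{g : G | f g = x} * Fintype.card H = Fintype.card G := by
  have hfiber : ∀ y, #{g : G | f g = y} = #{g : G | f g = x} := fun y => by
    obtain ⟨e, he⟩ := htrans y x
    exact card_equiv (s := {g | f g = y}) (t := {g | f g = x}) e fun g => by simp [he]
  have hsum := card_eq_sum_card_fiberwise (f := f) (s := univ) (t := univ) fun _ _ => mem_univ _
  rw [card_univ, sum_congr rfl fun y _ => hfiber y, sum_const, card_univ, smul_eq_mul] at hsum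
  rw [hsum, mul_comm]

theorem sum_card_filter_mem {Ω ι : Type*} [Fintype Ω] [DecidableEq Ω] (I : Finset ι)
    (F : ι → Finset Ω) : ∑ ω, #{i ∈ I | ω ∈ F i} = ∑ i ∈ I, #(F i) := by
  have := sum_card_bipartiteAbove_eq_sum_card_bipartiteBelow (s := univ) (t := I)
    (r := fun ω i => ω ∈ F i)
  simpa [bipartiteAbove, bipartiteBelow] using this

theorem card_filter_lt_abs_mul_sq_le_sum_sq {ι : Type*} (s : Finset ι) (f : ι → ℝ) {ε : ℝ}
    (hε : 0 ≤ ε) : #{i ∈ s | ε < |f i|} * ε ^ 2 ≤ ∑ i ∈ s, f i ^ 2 := by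
  calc #{i ∈ s | ε < |f i|} * ε ^ 2 ≤ ∑ i ∈ s with ε < |f i|, f i ^ 2 := by
        rw [← nsmul_eq_mul]
        exact card_nsmul_le_sum _ _ _ fun i hi => by
          rw [← sq_abs (f i)]
          exact pow_le_pow_left₀ hε (mem_filter.1 hi).2.le 2
    _ ≤ ∑ i ∈ s, f i ^ 2 :=
        sum_le_sum_of_subset_of_nonneg (filter_subset _ _) fun _ _ _ => sq_nonneg _

/-- Under the uniform measure on `Ω`: `Var X ≤ #{dependent pairs} (p - p²)` for the number
`X ω = #{a ∈ A | ω ∈ E a}` of events of probability `p` that occur. -/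
theorem sum_sq_card_filter_mem_sub_le {Ω ι : Type*} [Fintype Ω] [DecidableEq Ω]
    (A : Finset ι) (E : ι → Finset Ω) (dep : ι → ι → Prop) [DecidableRel dep] (p : ℝ)
    (hE : ∀ a ∈ A, (#(E a) : ℝ) = p * Fintype.card Ω)
    (hindep : ∀ a ∈ A, ∀ b ∈ A, ¬ dep a b → (#(E a ∩ E b) : ℝ) = p ^ 2 * Fintype.card Ω) :
    ∑ ω, ((#{a ∈ A | ω ∈ E a} : ℝ) - p * #A) ^ 2
      ≤ #{x ∈ A ×ˢ A | dep x.1 x.2} * (p - p ^ 2) * Fintype.card Ω := by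
  set N : ℝ := (Fintype.card Ω : ℝ)
  have hfirst : ∑ ω, (#{a ∈ A | ω ∈ E a} : ℝ) = #A * (p * N) := by
    rw [← Nat.cast_sum, sum_card_filter_mem, Nat.cast_sum, sum_congr rfl hE, sum_const,
      nsmul_eq_mul]
  have hsecond : ∑ ω, (#{a ∈ A | ω ∈ E a} : ℝ) ^ 2 = ∑ x ∈ A ×ˢ A, (#(E x.1 ∩ E x.2) : ℝ) := by
    have hsq : ∀ ω, #{a ∈ A | ω ∈ E a} ^ 2 = #{x ∈ A ×ˢ A | ω ∈ E x.1 ∩ E x.2} := fun ω => by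
      rw [sq, ← card_product, ← filter_product]
      simp only [mem_inter]
    simp only [← Nat.cast_pow, hsq]
    rw [← Nat.cast_sum, sum_card_filter_mem, Nat.cast_sum]
  have hpair : ∀ x ∈ A ×ˢ A, (#(E x.1 ∩ E x.2) : ℝ)
      ≤ p ^ 2 * N + if dep x.1 x.2 then (p - p ^ 2) * N else 0 := by
    rintro ⟨a, b⟩ hx
    rw [mem_product] at hx
    split_ifs with h
    · calc (#(E a ∩ E b) : ℝ) ≤ #(E a) := by exact_mod_cast card_le_card inter_subset_left
        _ = _ := by rw [hE a hx.1]; ring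
    · rw [hindep a hx.1 b hx.2 h, add_zero]
  have hsum := sum_le_sum hpair
  rw [sum_add_distrib, sum_const, card_product, sum_ite, sum_const_zero, sum_const, nsmul_eq_mul,
    nsmul_eq_mul, ← hsecond] at hsum
  simp only [sub_sq, sum_add_distrib, sum_sub_distrib, ← sum_mul, ← mul_sum, hfirst, sum_const,
    card_univ, nsmul_eq_mul]
  push_cast at hsum
  linarith

end Finset

section IncreasingTuples

def increasingTuples (k : ℕ) (α : Type*) [LinearOrder α] [Fintype α] : Finset (Fin k → α) :=
  {a | ∀ i j, i < j → a i < a j}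

variable {α : Type*} [LinearOrder α] [Fintype α] {k : ℕ}

theorem mem_increasingTuples {a : Fin k → α} : a ∈ increasingTuples k α ↔ StrictMono a := by
  simp [increasingTuples, StrictMono]

theorem card_filter_increasingTuples (P : Finset α → Prop) [DecidablePred P] :
    #{a ∈ increasingTuples k α | P (univ.image a)} = #{s ∈ powersetCard k univ | P s} := by
  refine card_bij (fun a _ => univ.image a) (fun a ha => ?_) (fun a ha b hb hab => ?_)
    (fun s hs => ?_)
  · simp only [mem_filter, mem_increasingTuples] at ha
    simp [ha.2, card_image_of_injective _ ha.1.injective]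
  · simp only [mem_filter, mem_increasingTuples] at ha hb
    refine (ha.1.range_inj hb.1).1 ?_
    simpa [Set.image_univ] using congrArg ((↑) : Finset α → Set α) hab
  · simp only [mem_filter, mem_powersetCard_univ] at hs
    refine ⟨s.orderEmbOfFin hs.1, ?_, image_orderEmbOfFin_univ s hs.1⟩
    simp [mem_increasingTuples, (s.orderEmbOfFin hs.1).strictMono, hs.2]

theorem card_increasingTuples : #(increasingTuples k α) = (Fintype.card α).choose k := by
  simpa using card_filter_increasingTuples (k := k) (α := α) (fun _ => True)

theorem card_mul_card_filter_mem_image_eq (x : α) :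
    Fintype.card α * #{a ∈ increasingTuples k α | x ∈ univ.image a}
      = k * (Fintype.card α).choose k := by
  rw [card_filter_increasingTuples (fun s => x ∈ s)]
  obtain ⟨m, hm⟩ := Nat.exists_eq_add_one_of_ne_zero (Fintype.card_pos_iff.2 ⟨x⟩).ne'
  rcases Nat.eq_zero_or_pos k with rfl | hk
  · simp
  · obtain ⟨j, rfl⟩ := Nat.exists_eq_add_one.2 hk
    have h := card_filter_powersetCard_subset {x} univ (j + 1) (subset_univ _) (by simp)
    simp only [singleton_subset_iff, card_singleton, card_univ, hm] at h
    rw [h, hm, Nat.add_sub_cancel, Nat.add_sub_cancel, Nat.add_one_mul_choose_eq, mul_comm]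

/-- Each point lies in the range of `k C(n, k) / n` increasing tuples, so at most
`n (k C(n, k) / n)²` pairs of increasing tuples share an entry. -/
theorem card_mul_card_filter_exists_eq_le :
    Fintype.card α * #{x ∈ increasingTuples k α ×ˢ increasingTuples k α | ∃ i j, x.1 i = x.2 j}
      ≤ (k * (Fintype.card α).choose k) ^ 2 := by
  set T := increasingTuples k α
  set c : α → Finset (Fin k → α) := fun y => {a ∈ T | y ∈ univ.image a}
  have hsub : {x ∈ T ×ˢ T | ∃ i j, x.1 i = x.2 j} ⊆ univ.biUnion fun y => c y ×ˢ c y := by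
    rintro ⟨a, b⟩ h
    simp only [mem_filter, mem_product] at h
    obtain ⟨⟨ha, hb⟩, i, j, hij⟩ := h
    simp only [mem_biUnion, mem_univ, true_and, mem_product, mem_filter, mem_image, c]
    exact ⟨b j, ⟨ha, i, hij⟩, hb, j, rfl⟩
  have hsum : ∑ y, #(c y) = k * (Fintype.card α).choose k := by
    rw [sum_card_filter_mem, sum_congr rfl fun a ha => card_image_of_injective _
      (mem_increasingTuples.1 ha).injective, sum_const, card_increasingTuples, card_univ,
      Fintype.card_fin, smul_eq_mul, mul_comm]
  calc Fintype.card α * #{x ∈ T ×ˢ T | ∃ i j, x.1 i = x.2 j}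
      ≤ Fintype.card α * ∑ y, #(c y) * #(c y) := by
        gcongr
        exact (card_le_card hsub).trans (card_biUnion_le.trans_eq (by simp only [card_product]))
    _ = ∑ y, k * (Fintype.card α).choose k * #(c y) := by
        rw [mul_sum]
        exact sum_congr rfl fun y _ => by rw [← mul_assoc, card_mul_card_filter_mem_image_eq]
    _ = (k * (Fintype.card α).choose k) ^ 2 := by rw [← mul_sum, hsum, sq]

end IncreasingTuples

section PatternAt

variable {α : Type*} [LinearOrder α] [Fintype α] {k : ℕ}

def patternAt (σ : Perm (Fin k)) (a : Fin k → α) : Finset (Perm α) :=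
  {π | ∀ i j, σ i < σ j ↔ π (a i) < π (a j)}

theorem patternAt_eq_filter_sort {a : Fin k → α} (ha : Function.Injective a) (σ : Perm (Fin k)) :
    patternAt σ a = ({π | Tuple.sort (π ∘ a) = σ⁻¹} : Finset (Perm α)) :=
  filter_congr fun π _ => (Tuple.sort_eq_inv_iff (π.injective.comp ha)).symm

/-- The pattern of `π` at `a` is uniform: right multiplication by a permutation `c` with
`c ∘ a = a ∘ ρ` turns the pattern `τ` into `τ * ρ`. -/
theorem card_patternAt_mul_factorial {a : Fin k → α} (ha : Function.Injective a)
    (σ : Perm (Fin k)) :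
    #(patternAt σ a) * k.factorial = (Fintype.card α).factorial := by
  have h := card_filter_eq_mul_card_eq_card (fun π : Perm α => Tuple.sort (π ∘ a)) (fun x y =>
    ⟨Equiv.mulRight ((x * y⁻¹).viaEmbedding ⟨a, ha⟩), fun π => ?_⟩) σ⁻¹
  · rwa [Fintype.card_perm, Fintype.card_perm, Fintype.card_fin, ← patternAt_eq_filter_sort ha]
      at h
  rw [Equiv.coe_mulRight, Tuple.sort_mul_comp ha (Perm.viaEmbedding_apply _ ⟨a, ha⟩),
    inv_mul_eq_iff_eq_mul, inv_mul_cancel_right]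

/-- Independence of the patterns at two tuples with disjoint ranges: one permutation moves the
entries of both tuples at once. -/
theorem card_patternAt_inter_mul_factorial {a b : Fin k → α} (ha : Function.Injective a)
    (hb : Function.Injective b) (hab : ∀ i j, a i ≠ b j) (σ τ : Perm (Fin k)) :
    #(patternAt σ a ∩ patternAt τ b) * (k.factorial * k.factorial)
      = (Fintype.card α).factorial := by
  have hab' : Function.Injective (Sum.elim a b) := ha.sumElim hb hab
  have h := card_filter_eq_mul_card_eq_card
    (fun π : Perm α => (Tuple.sort (π ∘ a), Tuple.sort (π ∘ b)))
    (fun x y => ⟨Equiv.mulRight ((Perm.sumCongr (x.1 * y.1⁻¹) (x.2 * y.2⁻¹)).viaEmbedding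
      ⟨_, hab'⟩), fun π => ?_⟩) (σ⁻¹, τ⁻¹)
  · rw [patternAt_eq_filter_sort ha, patternAt_eq_filter_sort hb, ← filter_and]
    simpa only [Prod.mk.injEq, Fintype.card_prod, Fintype.card_perm, Fintype.card_fin] using h
  rw [Equiv.coe_mulRight,
    Tuple.sort_mul_comp ha fun i => Perm.viaEmbedding_apply _ ⟨_, hab'⟩ (.inl i),
    Tuple.sort_mul_comp hb fun i => Perm.viaEmbedding_apply _ ⟨_, hab'⟩ (.inr i)]
  simp only [Prod.ext_iff, inv_mul_eq_iff_eq_mul, inv_mul_cancel_right]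

end PatternAt

theorem patOcc_eq_card_filter {n k : ℕ} (π : Perm (Fin n)) (σ : Perm (Fin k)) :
    patOcc π σ = #{a ∈ increasingTuples k (Fin n) | π ∈ patternAt σ a} := by
  simp [patOcc, increasingTuples, patternAt, filter_filter]

section Profile

variable {n k : ℕ}

theorem sum_sq_patOcc_sub_le (σ : Perm (Fin k)) :
    ∑ π : Perm (Fin n), ((patOcc π σ : ℝ) - n.choose k / k.factorial) ^ 2
      ≤ #{x ∈ increasingTuples k (Fin n) ×ˢ increasingTuples k (Fin n) | ∃ i j, x.1 i = x.2 j}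
        / k.factorial * n.factorial := by
  have hvar := sum_sq_card_filter_mem_sub_le (increasingTuples k (Fin n)) (patternAt σ)
    (fun a b => ∃ i j, a i = b j) (1 / k.factorial) (fun a ha => ?_) (fun a ha b hb hab => ?_)
  · simp only [← patOcc_eq_card_filter, card_increasingTuples, Fintype.card_fin,
      Fintype.card_perm, one_div_mul_eq_div] at hvar
    refine hvar.trans ?_
    rw [div_eq_mul_one_div (#_ : ℝ)]
    gcongr
    exact sub_le_self _ (sq_nonneg _)
  · have h := card_patternAt_mul_factorial (mem_increasingTuples.1 ha).injective σ
    rw [Fintype.card_fin] at h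
    rw [Fintype.card_perm, Fintype.card_fin, ← h]
    push_cast
    field_simp
  · push Not at hab
    have h := card_patternAt_inter_mul_factorial (mem_increasingTuples.1 ha).injective
      (mem_increasingTuples.1 hb).injective hab σ σ
    rw [Fintype.card_fin] at h
    rw [Fintype.card_perm, Fintype.card_fin, ← h]
    push_cast
    field_simp

theorem sum_sq_patDens_sub_le (hn : 0 < n) (hkn : k ≤ n) (σ : Perm (Fin k)) :
    ∑ π : Perm (Fin n), (patDens π σ - 1 / k.factorial) ^ 2
      ≤ (k : ℝ) ^ 2 / n * (n.factorial / k.factorial) := by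
  have hC : (0 : ℝ) < n.choose k := by exact_mod_cast Nat.choose_pos hkn
  have hM := card_mul_card_filter_exists_eq_le (α := Fin n) (k := k)
  rw [Fintype.card_fin] at hM
  calc ∑ π : Perm (Fin n), (patDens π σ - 1 / k.factorial) ^ 2
      = (∑ π : Perm (Fin n), ((patOcc π σ : ℝ) - n.choose k / k.factorial) ^ 2)
          / (n.choose k : ℝ) ^ 2 := by
        rw [sum_div]
        refine sum_congr rfl fun π _ => ?_
        rw [patDens]
        field_simp
    _ ≤ _ / k.factorial * n.factorial / (n.choose k : ℝ) ^ 2 := by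
        gcongr
        exact sum_sq_patOcc_sub_le σ
    _ ≤ (k * n.choose k : ℝ) ^ 2 / n / k.factorial * n.factorial / (n.choose k : ℝ) ^ 2 := by
        gcongr
        rw [le_div_iff₀ (by positivity), mul_comm]
        exact_mod_cast hM
    _ = (k : ℝ) ^ 2 / n * (n.factorial / k.factorial) := by
        field_simp

theorem card_lt_dist_profile_mul_sq_le (hn : 0 < n) (hkn : k ≤ n) {ε : ℝ} (hε : 0 < ε) :
    #{π : Perm (Fin n) | ε < dist (fun σ : Perm (Fin k) => patDens π σ)
        (fun _ => 1 / (k.factorial : ℝ))} * ε ^ 2 ≤ (k : ℝ) ^ 2 / n * n.factorial := by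
  have hsub : ({π | ε < dist (fun σ : Perm (Fin k) => patDens π σ)
        (fun _ => 1 / (k.factorial : ℝ))} : Finset (Perm (Fin n)))
      ⊆ univ.biUnion fun σ : Perm (Fin k) => {π | ε < |patDens π σ - 1 / k.factorial|} := by
    intro π hπ
    simp only [mem_filter, mem_univ, true_and] at hπ
    contrapose! hπ
    simp only [mem_biUnion, mem_univ, mem_filter, true_and, not_exists, not_lt] at hπ
    exact (dist_pi_le_iff hε.le).2 fun σ => (Real.dist_eq _ _).trans_le (hπ σ)
  calc (#{π : Perm (Fin n) | ε < dist (fun σ : Perm (Fin k) => patDens π σ)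
        (fun _ => 1 / (k.factorial : ℝ))} : ℝ) * ε ^ 2
      ≤ (∑ σ : Perm (Fin k), (#{π : Perm (Fin n) | ε < |patDens π σ - 1 / k.factorial|} : ℝ))
          * ε ^ 2 := by
        gcongr
        exact_mod_cast (card_le_card hsub).trans card_biUnion_le
    _ ≤ ∑ _σ : Perm (Fin k), (k : ℝ) ^ 2 / n * (n.factorial / k.factorial) := by
        rw [sum_mul]
        exact sum_le_sum fun σ _ => (card_filter_lt_abs_mul_sq_le_sum_sq _ _ hε.le).trans
          (sum_sq_patDens_sub_le hn hkn σ)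
    _ = (k : ℝ) ^ 2 / n * n.factorial := by
        rw [sum_const, card_univ, Fintype.card_perm, Fintype.card_fin, nsmul_eq_mul]
        field_simp

end Profile

/-- Law of large numbers for the `k`-profile: for a uniformly random `π ∈ S_n`,
the vector of pattern densities converges in probability to `(1/k!, ..., 1/k!)`. -/
theorem profile_tendsto_uniform (k : ℕ) :
    ∀ ε > (0 : ℝ),
      Filter.Tendsto
        (fun n : ℕ =>
          (Nat.card {π : Equiv.Perm (Fin n) //
              ε < dist (fun σ : Equiv.Perm (Fin k) => patDens π σ)
                (fun _ : Equiv.Perm (Fin k) => 1 / (k.factorial : ℝ))} : ℝ)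
            / (n.factorial : ℝ))
        Filter.atTop (nhds 0) := by
  intro ε hε
  have hlim : Filter.Tendsto (fun n : ℕ => (k : ℝ) ^ 2 / ε ^ 2 * (1 / n)) Filter.atTop
      (nhds 0) := by
    simpa using tendsto_one_div_atTop_nhds_zero_nat.const_mul ((k : ℝ) ^ 2 / ε ^ 2)
  refine squeeze_zero' (Filter.Eventually.of_forall fun n => by positivity) ?_ hlim
  filter_upwards [Filter.eventually_ge_atTop (max k 1)] with n hn
  obtain ⟨hkn, hn⟩ := max_le_iff.1 hn
  have hbound := card_lt_dist_profile_mul_sq_le hn hkn hε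
  rw [Nat.card_eq_fintype_card, Fintype.card_subtype, div_le_iff₀ (by positivity)]
  rw [← le_div_iff₀ (by positivity)] at hbound
  refine hbound.trans_eq ?_
  field_simp
end

section
/- For k = 3 and l = 2, if a vector v ∈ ℝ^{S_3} satisfies that the sum of its entries over every two-sided coset of S_2 in S_3 vanishes, then v is a scalar multiple of the sign vector (sign σ)_{σ∈S_3}; conversely, the sign vector satisfies this property. -/
/-!
Since the stabiliser of `0` in `S₃` is `{1, (1 2)}`, the sum over `α S₂ β` is
`v (α β) + v (α (1 2) β)`. Writing `α β = g` and `α (1 2) β = g (β⁻¹ (1 2) β)`, and using that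
every transposition is conjugate to `(1 2)`, the condition says exactly that right multiplication
by any transposition negates `v`. As transpositions generate the symmetric group, this forces
`v σ = sign σ * v 1`.
-/

open Finset Equiv

namespace Equiv.Perm

variable {α R : Type*} [DecidableEq α]

theorem apply_mul_swap_eq_neg_of_forall_add_eq_zero [AddGroup R] {f : Perm α → R}
    {a b : α} (hab : a ≠ b) (hf : ∀ σ τ, f (σ * τ) + f (σ * swap a b * τ) = 0)
    (g : Perm α) {x y : α} (hxy : x ≠ y) : f (g * swap x y) = -f g := by
  obtain ⟨c, hc⟩ := isConj_iff.1 (isConj_swap hab hxy)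
  have := hf (g * c) c⁻¹
  rw [mul_inv_cancel_right, mul_assoc g c, mul_assoc g, hc] at this
  exact eq_neg_of_add_eq_zero_right this

variable [Fintype α] [CommRing R]

theorem eq_apply_one_mul_sign_of_apply_mul_swap {f : Perm α → R}
    (hf : ∀ g x y, x ≠ y → f (g * swap x y) = -f g) (σ : Perm α) :
    f σ = f 1 * (sign σ : ℤ) := by
  induction σ using swap_induction_on' with
  | one => simp
  | mul_swap g x y hxy ih => simp [hf g x y hxy, ih, sign_swap hxy]

theorem sign_mul_add_sign_mul_swap_mul_eq_zero (σ τ : Perm α) {a b : α} (hab : a ≠ b) :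
    ((sign (σ * τ) : ℤ) : R) + (sign (σ * swap a b * τ) : ℤ) = 0 := by
  simp [sign_swap hab]

end Equiv.Perm

lemma filter_apply_zero_eq_zero_eq :
    univ.filter (fun τ : Perm (Fin 3) => τ 0 = 0) = {1, swap 1 2} := by
  decide

lemma sum_filter_apply_zero_eq_zero {M : Type*} [AddCommMonoid M] (f : Perm (Fin 3) → M)
    (α β : Perm (Fin 3)) :
    ∑ τ ∈ univ.filter (fun τ : Perm (Fin 3) => τ 0 = 0), f (α * τ * β) =
      f (α * β) + f (α * swap 1 2 * β) := by
  rw [filter_apply_zero_eq_zero_eq, sum_pair (by decide), mul_one]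

/-- For `k = 3`, `l = 2`: a vector `v ∈ ℝ^{S_3}` sums to zero over every two-sided coset
of `S_2 = {τ : τ 0 = 0}` in `S_3` if and only if `v` is a scalar multiple of the sign
vector. -/
theorem coset_sums_vanish_iff_sign (v : Equiv.Perm (Fin 3) → ℝ) :
    (∀ α β : Equiv.Perm (Fin 3),
        ∑ τ ∈ Finset.univ.filter (fun τ : Equiv.Perm (Fin 3) => τ 0 = 0),
          v (α * τ * β) = 0)
      ↔ ∃ c : ℝ, ∀ σ : Equiv.Perm (Fin 3),
          v σ = c * ((Equiv.Perm.sign σ : ℤ) : ℝ) := by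
  simp only [sum_filter_apply_zero_eq_zero]
  constructor
  · intro h
    exact ⟨v 1, Perm.eq_apply_one_mul_sign_of_apply_mul_swap fun g _ _ hxy =>
      Perm.apply_mul_swap_eq_neg_of_forall_add_eq_zero (by decide) h g hxy⟩
  · rintro ⟨c, hc⟩ α β
    rw [hc, hc, ← mul_add, Perm.sign_mul_add_sign_mul_swap_mul_eq_zero α β (by decide), mul_zero]
end
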